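/- Lower bound on convexity of variance (abstract version): suppose ‖u₀‖_{L²}²‖∇u(t)‖_{L²}² ≤ (1-δ₂)²‖∇Q‖_{L²}²‖Q‖_{L²}² and the sharp Gagliardo–Nirenberg inequality holds. Then 8‖∇u(t)‖_{L²}² - 6‖u(t)‖_{L⁴}⁴ ≥ c_δ ‖∇u(t)‖_{L²}² for a constant c_δ > 0 depending only on δ₂. -/
import Mathlib

theorem variance_convexity_lower_bound (δ₂ : ℝ) (hδ0 : 0 < δ₂) (hδ1 : δ₂ < 1) :
    ∃ cδ : ℝ, 0 < cδ ∧
      ∀ G m P K : ℝ, 0 ≤ G → 0 ≤ m → 0 ≤ P → 0 < K →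
        P ≤ 4 / (3 * K) * m * G ^ 3 → m * G ≤ (1 - δ₂) * K →
        8 * G ^ 2 - 6 * P ≥ cδ * G ^ 2 := by
  refine ⟨8 * δ₂, by linarith, ?_⟩
  intro G m P K hG hm hP hK h1 h2
  have hKne : (3 : ℝ) * K ≠ 0 := by positivity
  have h1' : P * (3 * K) ≤ 4 * m * G ^ 3 := by
    have := mul_le_mul_of_nonneg_right h1 (le_of_lt (by positivity : (0:ℝ) < 3 * K))
    calc P * (3 * K) ≤ 4 / (3 * K) * m * G ^ 3 * (3 * K) := this
      _ = 4 * m * G ^ 3 := by field_simp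
  nlinarith [mul_le_mul_of_nonneg_right h2 (sq_nonneg G), sq_nonneg G, mul_pos hδ0 hK]
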